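/- Let A be the abelianization of the group with generators a₁, b₁, a₂, b₂, c₁, d₁, c₂, d₂ and relations [b₁⁻¹, d₁⁻¹] = a₁, [a₁⁻¹, d₁] = b₁, [b₂⁻¹, d₂⁻¹] = a₂, [a₂⁻¹, d₂] = b₂, [d₁⁻¹, b₂⁻¹] = c₁, [c₁⁻¹, b₂] = d₁, [d₂⁻¹, b₁⁻¹] = c₂, [c₂⁻¹, b₁]^(n+1) = d₂ (for a fixed natural number n ≥ 1), together with [a₁, c₁] = 1, [a₁, c₂] = 1, [a₁, d₂] = 1, [b₁, c₁] = 1, [a₂, c₁] = 1, [a₂, c₂] = 1, [a₂, d₁] = 1, [b₂, c₂] = 1, [a₁, b₁][a₂, b₂] = 1, [c₁, d₁][c₂, d₂] = 1. Then A is the trivial group. -/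

import Mathlib

/-! Each of the first eight relations equates one generator with a commutator, or a power of
one, so every generator dies in the abelianization. -/

theorem MonoidHom.map_eq_one_of_map_mul_inv_eq_one {G A : Type*} [Group G] [CommGroup A]
    (f : G →* A) {c g : G} (hc : c ∈ commutator G) (h : f (c * g⁻¹) = 1) : f g = 1 := by
  rwa [map_mul, Abelianization.commutator_subset_ker f hc, one_mul, map_inv, inv_eq_one] at h

theorem PresentedGroup.abelianization_eq_one {α : Type*} {rels : Set (FreeGroup α)}
    (h : ∀ i, Abelianization.of (PresentedGroup.of (rels := rels) i) = 1)
    (x : Abelianization (PresentedGroup rels)) : x = 1 :=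
  DFunLike.congr_fun (Abelianization.hom_ext (MonoidHom.id _) 1 (PresentedGroup.ext h)) x

namespace Stmt4

open scoped commutatorElement

def a₁ : FreeGroup (Fin 8) := FreeGroup.of 0
def b₁ : FreeGroup (Fin 8) := FreeGroup.of 1
def a₂ : FreeGroup (Fin 8) := FreeGroup.of 2
def b₂ : FreeGroup (Fin 8) := FreeGroup.of 3
def c₁ : FreeGroup (Fin 8) := FreeGroup.of 4
def d₁ : FreeGroup (Fin 8) := FreeGroup.of 5
def c₂ : FreeGroup (Fin 8) := FreeGroup.of 6
def d₂ : FreeGroup (Fin 8) := FreeGroup.of 7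

def rels (n : ℕ) : Set (FreeGroup (Fin 8)) :=
  { ⁅b₁⁻¹, d₁⁻¹⁆ * a₁⁻¹,
    ⁅a₁⁻¹, d₁⁆ * b₁⁻¹,
    ⁅b₂⁻¹, d₂⁻¹⁆ * a₂⁻¹,
    ⁅a₂⁻¹, d₂⁆ * b₂⁻¹,
    ⁅d₁⁻¹, b₂⁻¹⁆ * c₁⁻¹,
    ⁅c₁⁻¹, b₂⁆ * d₁⁻¹,
    ⁅d₂⁻¹, b₁⁻¹⁆ * c₂⁻¹,
    ⁅c₂⁻¹, b₁⁆ ^ (n + 1) * d₂⁻¹,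
    ⁅a₁, c₁⁆, ⁅a₁, c₂⁆, ⁅a₁, d₂⁆, ⁅b₁, c₁⁆,
    ⁅a₂, c₁⁆, ⁅a₂, c₂⁆, ⁅a₂, d₁⁆, ⁅b₂, c₂⁆,
    ⁅a₁, b₁⁆ * ⁅a₂, b₂⁆, ⁅c₁, d₁⁆ * ⁅c₂, d₂⁆ }

theorem abelianization_trivial_general (n : ℕ) :
    ∀ x : Abelianization (PresentedGroup (rels n)), x = 1 := by
  set f := Abelianization.of.comp (PresentedGroup.mk (rels n))
  have mem_commutator {x y : FreeGroup (Fin 8)} : ⁅x, y⁆ ∈ commutator (FreeGroup (Fin 8)) :=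
    Subgroup.commutator_mem_commutator trivial trivial
  have of_relator {c g : FreeGroup (Fin 8)} (hc : c ∈ commutator _) (hr : c * g⁻¹ ∈ rels n) :
      f g = 1 :=
    f.map_eq_one_of_map_mul_inv_eq_one hc (by simp [f, PresentedGroup.one_of_mem hr])
  have ha₁ : f a₁ = 1 := of_relator (c := ⁅b₁⁻¹, d₁⁻¹⁆) mem_commutator (by simp [rels])
  have hb₁ : f b₁ = 1 := of_relator (c := ⁅a₁⁻¹, d₁⁆) mem_commutator (by simp [rels])
  have ha₂ : f a₂ = 1 := of_relator (c := ⁅b₂⁻¹, d₂⁻¹⁆) mem_commutator (by simp [rels])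
  have hb₂ : f b₂ = 1 := of_relator (c := ⁅a₂⁻¹, d₂⁆) mem_commutator (by simp [rels])
  have hc₁ : f c₁ = 1 := of_relator (c := ⁅d₁⁻¹, b₂⁻¹⁆) mem_commutator (by simp [rels])
  have hd₁ : f d₁ = 1 := of_relator (c := ⁅c₁⁻¹, b₂⁆) mem_commutator (by simp [rels])
  have hc₂ : f c₂ = 1 := of_relator (c := ⁅d₂⁻¹, b₁⁻¹⁆) mem_commutator (by simp [rels])
  have hd₂ : f d₂ = 1 := of_relator (c := ⁅c₂⁻¹, b₁⁆ ^ (n + 1)) (pow_mem mem_commutator _) (by simp [rels])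
  refine PresentedGroup.abelianization_eq_one fun i => ?_
  fin_cases i
  exacts [ha₁, hb₁, ha₂, hb₂, hc₁, hd₁, hc₂, hd₂]

/-- The abelianization of the presentation with `⁅c₂⁻¹, b₁⁆^(n+1) = d₂` is trivial. -/
theorem abelianization_trivial (n : ℕ) (hn : 1 ≤ n) :
    ∀ x : Abelianization (PresentedGroup (rels n)), x = 1 :=
  abelianization_trivial_general n

end Stmt4
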